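/- For every extended equilibrium x* of the path-graph dynamics ẋ₁ = q(x₂) - x₁, ẋ_i = q(x_{i-1}) + q(x_{i+1}) - 2x_i (2 ≤ i ≤ N-1), ẋ_N = q(x_{N-1}) - x_N, one has max_{i,j} |x*_j - x*_i| ≤ (N-2)²/4. -/

import Mathlib

/-!
At an extended equilibrium, `x₁ = k₂` lies within `1/2` of the integer `k₁`, so `k₁ = k₂`, and
likewise `k_{N-1} = k_N`; in the interior, `2xᵢ = k_{i-1} + k_{i+1}` with `|xᵢ - kᵢ| ≤ 1/2` bounds
the second differences of `k` by `1`. Hence the increments `k_{i+1} - kᵢ` vanish at both ends of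
the path and change by at most `1` per step, so each is bounded by its distance to the nearer
end, and the total variation of `k` is at most `∑_{s=0}^{N-2} min(s, N-2-s) ≤ (N-2)²/4`. Every
`xᵢ` is the midpoint of two levels, so the spread of `x` is bounded by that of `k`.
-/

/-- `x` is an extended equilibrium of the path-graph dynamics with quantization
levels `k` (components indexed by 1,…,N): the affine field `f_k` vanishes at `x`
and `x` lies in the closure of `S_k`. -/
def IsPathExtendedEquilibrium (N : ℕ) (x : ℕ → ℝ) (k : ℕ → ℤ) : Prop :=
  ((k 2 : ℝ) - x 1 = 0) ∧
  (∀ i : ℕ, 2 ≤ i → i ≤ N - 1 → (k (i - 1) : ℝ) + (k (i + 1) : ℝ) - 2 * x i = 0) ∧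
  ((k (N - 1) : ℝ) - x N = 0) ∧
  (∀ i : ℕ, 1 ≤ i → i ≤ N → (k i : ℝ) - 1/2 ≤ x i ∧ x i ≤ (k i : ℝ) + 1/2)

open Finset

theorem sum_range_min_sub_le (L : ℕ) :
    ∑ s ∈ range (L + 1), min (s : ℝ) (L - s) ≤ (L : ℝ) ^ 2 / 4 := by
  induction L using Nat.strong_induction_on with
  | _ L ih =>
    match L with
    | 0 => simp
    | 1 => norm_num [sum_range_succ]
    | L + 2 =>
      have hterm (s : ℕ) :
          min ((s : ℝ) + 1) ((L : ℝ) + 2 - (s + 1)) = min (s : ℝ) (L - s) + 1 := by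
        rw [← min_add_add_right]; ring_nf
      have hshift : ∑ s ∈ range (L + 2 + 1), min (s : ℝ) ((L + 2 : ℕ) - s)
          = ∑ s ∈ range (L + 1), (min (s : ℝ) (L - s) + 1) := by
        rw [sum_range_succ, sum_range_succ']
        push_cast
        simp [hterm, add_nonneg]
      rw [hshift, sum_add_distrib, sum_const, card_range, nsmul_eq_mul]
      push_cast
      nlinarith [ih L (by omega)]

theorem abs_sub_le_of_abs_sub_succ_le_one {f : ℕ → ℝ} {m n : ℕ} (hmn : m ≤ n)
    (hf : ∀ i, m ≤ i → i < n → |f (i + 1) - f i| ≤ 1) :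
    |f n - f m| ≤ n - m := by
  have := dist_le_Ico_sum_of_dist_le (f := f) (d := fun _ => 1) hmn fun hm hn => by
    rw [Real.dist_eq, abs_sub_comm]; exact hf _ hm hn
  simpa [Real.dist_eq, abs_sub_comm, Nat.cast_sub hmn] using this

theorem sum_range_abs_le_sq_div_four {f : ℕ → ℝ} {L : ℕ} (h0 : f 0 = 0) (hL : f L = 0)
    (hf : ∀ i < L, |f (i + 1) - f i| ≤ 1) :
    ∑ i ∈ range (L + 1), |f i| ≤ (L : ℝ) ^ 2 / 4 := by
  refine (sum_le_sum fun i hi => ?_).trans (sum_range_min_sub_le L)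
  have hiL : i ≤ L := Nat.lt_succ_iff.mp (mem_range.mp hi)
  refine le_min ?_ ?_
  · simpa [h0] using
      abs_sub_le_of_abs_sub_succ_le_one (Nat.zero_le i) fun j _ hj => hf j (by omega)
  · simpa [hL, abs_sub_comm, Nat.cast_sub hiL] using
      abs_sub_le_of_abs_sub_succ_le_one hiL fun j _ hj => hf j hj

theorem abs_sub_le_sum_Ico_abs_sub_succ (g : ℕ → ℝ) {a b p q : ℕ} (hp : p ∈ Icc a b)
    (hq : q ∈ Icc a b) : |g p - g q| ≤ ∑ i ∈ Ico a b, |g (i + 1) - g i| := by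
  wlog hqp : q ≤ p generalizing p q
  · rw [abs_sub_comm]; exact this hq hp (by omega)
  rw [mem_Icc] at hp hq
  calc |g p - g q| ≤ ∑ i ∈ Ico q p, |g (i + 1) - g i| := by
        simpa [Real.dist_eq, abs_sub_comm] using dist_le_Ico_sum_dist g hqp
    _ ≤ ∑ i ∈ Ico a b, |g (i + 1) - g i| :=
        sum_le_sum_of_subset_of_nonneg (Ico_subset_Ico hq.1 hp.2) fun _ _ _ => abs_nonneg _

theorem Int.eq_of_abs_cast_sub_le_half {a b : ℤ} (h : |(a - b : ℝ)| ≤ 1 / 2) : a = b := by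
  have : ((|a - b| : ℤ) : ℝ) < 1 := by push_cast; linarith
  exact sub_eq_zero.1 (Int.abs_lt_one_iff.1 (by exact_mod_cast this))

namespace IsPathExtendedEquilibrium

variable {N : ℕ} {x : ℕ → ℝ} {k : ℕ → ℤ}

theorem abs_sub_le_half (hx : IsPathExtendedEquilibrium N x k) {i : ℕ} (hi : i ∈ Icc 1 N) :
    |x i - k i| ≤ 1 / 2 := by
  obtain ⟨hlo, hhi⟩ := hx.2.2.2 i (mem_Icc.1 hi).1 (mem_Icc.1 hi).2
  exact abs_sub_le_iff.2 ⟨by linarith, by linarith⟩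

theorem k_two_eq_k_one (hx : IsPathExtendedEquilibrium N x k) (hN : 1 ≤ N) : k 2 = k 1 :=
  Int.eq_of_abs_cast_sub_le_half <| by
    simpa [show x 1 = k 2 by linarith [hx.1]] using hx.abs_sub_le_half (i := 1) (by simp [hN])

theorem k_sub_one_eq_k (hx : IsPathExtendedEquilibrium N x k) (hN : 1 ≤ N) :
    k (N - 1) = k N :=
  Int.eq_of_abs_cast_sub_le_half <| by
    simpa [show x N = k (N - 1) by linarith [hx.2.2.1]] using
      hx.abs_sub_le_half (i := N) (by simp [hN])

theorem abs_second_diff_le_one (hx : IsPathExtendedEquilibrium N x k) {i : ℕ} (hi : 1 ≤ i)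
    (hiN : i + 2 ≤ N) : |(k (i + 2) - k (i + 1) : ℝ) - (k (i + 1) - k i)| ≤ 1 := by
  have hb := hx.abs_sub_le_half (i := i + 1) (by simp; omega)
  have hmid := hx.2.1 (i + 1) (by omega) (by omega)
  simp only [Nat.add_sub_cancel] at hmid
  rw [show (k (i + 2) - k (i + 1) : ℝ) - (k (i + 1) - k i) = 2 * (x (i + 1) - k (i + 1)) by
    linarith, abs_mul, abs_two]
  linarith

theorem abs_k_sub_k_le (hx : IsPathExtendedEquilibrium N x k) (hN : 2 ≤ N) {p q : ℕ}
    (hp : p ∈ Icc 1 N) (hq : q ∈ Icc 1 N) : |(k p - k q : ℝ)| ≤ ((N : ℝ) - 2) ^ 2 / 4 := by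
  set f : ℕ → ℝ := fun i => k (i + 2) - k (i + 1)
  have hf0 : f 0 = 0 := by simp [f, hx.k_two_eq_k_one (by omega)]
  have hfL : f (N - 2) = 0 := by
    simp [f, show N - 2 + 2 = N by omega, show N - 2 + 1 = N - 1 by omega,
      hx.k_sub_one_eq_k (by omega)]
  have hf i (hi : i < N - 2) : |f (i + 1) - f i| ≤ 1 :=
    hx.abs_second_diff_le_one (i := i + 1) (by omega) (by omega)
  calc |(k p - k q : ℝ)| ≤ ∑ i ∈ Ico 1 N, |(k (i + 1) - k i : ℝ)| :=
        abs_sub_le_sum_Ico_abs_sub_succ (fun i => (k i : ℝ)) hp hq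
    _ = ∑ i ∈ range (N - 2 + 1), |f i| := by
        rw [sum_Ico_eq_sum_range, show N - 1 = N - 2 + 1 by omega]
        refine sum_congr rfl fun i _ => ?_
        simp only [f, add_comm 1 i, add_assoc, one_add_one_eq_two]
    _ ≤ ((N - 2 : ℕ) : ℝ) ^ 2 / 4 := sum_range_abs_le_sq_div_four hf0 hfL hf
    _ = ((N : ℝ) - 2) ^ 2 / 4 := by rw [Nat.cast_sub hN, Nat.cast_ofNat]

theorem exists_eq_midpoint (hx : IsPathExtendedEquilibrium N x k) (hN : 2 ≤ N) {i : ℕ}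
    (hi : i ∈ Icc 1 N) : ∃ a ∈ Icc 1 N, ∃ b ∈ Icc 1 N, x i = (k a + k b) / 2 := by
  obtain ⟨hi1, hiN⟩ := mem_Icc.1 hi
  obtain rfl | hi1 := hi1.eq_or_lt
  · exact ⟨2, by simp [hN], 2, by simp [hN], by linarith [hx.1]⟩
  obtain rfl | hiN := hiN.eq_or_lt
  · exact ⟨i - 1, by simp; omega, i - 1, by simp; omega, by linarith [hx.2.2.1]⟩
  exact ⟨i - 1, by simp; omega, i + 1, by simp; omega, by linarith [hx.2.1 i hi1 (by omega)]⟩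

end IsPathExtendedEquilibrium

theorem path_equilibrium_distance_bound (N : ℕ) (hN : 2 ≤ N)
    (x : ℕ → ℝ) (k : ℕ → ℤ) (hx : IsPathExtendedEquilibrium N x k) :
    ∀ i j : ℕ, 1 ≤ i → i ≤ N → 1 ≤ j → j ≤ N →
      |x j - x i| ≤ ((N : ℝ) - 2) ^ 2 / 4 := by
  intro i j hi1 hiN hj1 hjN
  obtain ⟨a, ha, b, hb, hxi⟩ := hx.exists_eq_midpoint hN (mem_Icc.2 ⟨hi1, hiN⟩)
  obtain ⟨c, hc, d, hd, hxj⟩ := hx.exists_eq_midpoint hN (mem_Icc.2 ⟨hj1, hjN⟩)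
  calc |x j - x i| = |((k c - k a : ℝ) + (k d - k b)) / 2| := by
        rw [hxi, hxj]; congr 1; ring
    _ ≤ (|(k c - k a : ℝ)| + |(k d - k b : ℝ)|) / 2 := by
        rw [abs_div, abs_two]; gcongr; exact abs_add_le _ _
    _ ≤ ((N : ℝ) - 2) ^ 2 / 4 := by
        linarith [hx.abs_k_sub_k_le hN hc ha, hx.abs_k_sub_k_le hN hd hb]
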